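/- (Lemma 6, type B.) Let n ≥ 2, let e_1, …, e_n be the standard basis of ℤ^n, let Δ_+ = { e_a − e_b : 1 ≤ a < b ≤ n } ∪ { e_a + e_b : 1 ≤ a < b ≤ n } ∪ { e_a : 1 ≤ a ≤ n }, let the simple roots be α_a = e_a − e_{a+1} for 1 ≤ a ≤ n−1 together with α_n = e_n, and let α_max = e_1 + e_2. Then there do not exist ξ, ζ ∈ Δ_+, a nonempty set S of simple roots, and positive integers (m_s)_{s∈S} such that α_max = ξ + ζ + Σ_{s∈S} m_s·s, ξ + ζ ∉ Δ_+, and for every s ∈ S both ξ + s ∉ Δ_+ and ζ + s ∉ Δ_+. -/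

import Mathlib

/-- The standard basis vector `e_a` of `ℤ^n`. -/
def stdBasis (n : ℕ) (a : Fin n) : Fin n → ℤ := Pi.single a 1

/-- The positive roots of type `B_n` realized in `ℤ^n`:
`Δ_+ = { e_a − e_b, e_a + e_b : a < b } ∪ { e_a }`. -/
def posRootsB (n : ℕ) : Set (Fin n → ℤ) :=
  {v | (∃ a b : Fin n, a < b ∧
          (v = stdBasis n a - stdBasis n b ∨ v = stdBasis n a + stdBasis n b)) ∨
        ∃ a : Fin n, v = stdBasis n a}

/-- The simple roots of type `B_n`: `α_a = e_a − e_{a+1}` for `a < n`, and `α_n = e_n`. -/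
def simpleRootsB (n : ℕ) (hn : 2 ≤ n) : Set (Fin n → ℤ) :=
  {v | (∃ a b : Fin n, (b : ℕ) = (a : ℕ) + 1 ∧ v = stdBasis n a - stdBasis n b) ∨
        v = stdBasis n ⟨n - 1, by omega⟩}

/-!
If two positive roots `x, y` of `B_n` satisfy `x ⬝ᵥ y < 0`, then `x + y` is again a positive root.
So the hypotheses force `ξ`, `ζ` and `σ = ∑ m_s • s` to have pairwise nonnegative inner products.
Each of them has squared length at least `1` (for `σ` because its height `∑ m_s` is positive,
so `σ ≠ 0`), hence `|ξ + ζ + σ|² ≥ 3`, whereas `|e_1 + e_2|² = 2`.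
-/

open scoped Matrix

section DotProduct

variable {ι R : Type*} [Fintype ι]

lemma dotProduct_sum_smul_nonneg [CommSemiring R] [PartialOrder R] [IsOrderedRing R] {κ : Type*}
    {S : Finset κ} {x : ι → R} {v : κ → ι → R} {c : κ → R} (hv : ∀ s ∈ S, 0 ≤ x ⬝ᵥ v s)
    (hc : ∀ s ∈ S, 0 ≤ c s) : 0 ≤ x ⬝ᵥ ∑ s ∈ S, c s • v s := by
  rw [dotProduct_sum]
  refine Finset.sum_nonneg fun s hs => ?_
  rw [dotProduct_smul, smul_eq_mul]
  exact mul_nonneg (hc s hs) (hv s hs)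

lemma three_le_dotProduct_self_add_add [CommRing R] [LinearOrder R] [IsStrictOrderedRing R]
    {x y z : ι → R} (hx : 1 ≤ x ⬝ᵥ x) (hy : 1 ≤ y ⬝ᵥ y) (hz : 1 ≤ z ⬝ᵥ z) (hxy : 0 ≤ x ⬝ᵥ y)
    (hxz : 0 ≤ x ⬝ᵥ z) (hyz : 0 ≤ y ⬝ᵥ z) : 3 ≤ (x + y + z) ⬝ᵥ (x + y + z) := by
  simp only [add_dotProduct, dotProduct_add, dotProduct_comm y x, dotProduct_comm z x,
    dotProduct_comm z y]
  linarith

lemma one_le_dotProduct_self_of_ne_zero {v : ι → ℤ} (hv : v ≠ 0) : 1 ≤ v ⬝ᵥ v :=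
  star_trivial v ▸ Matrix.dotProduct_self_star_pos_iff.2 hv

end DotProduct

section PositiveRoots

variable {n : ℕ}

lemma stdBasis_dotProduct_stdBasis (a b : Fin n) :
    stdBasis n a ⬝ᵥ stdBasis n b = if a = b then 1 else 0 := by
  simp [stdBasis, Pi.single_apply, eq_comm]

lemma stdBasis_nonneg (a : Fin n) : 0 ≤ stdBasis n a :=
  Pi.single_nonneg.2 zero_le_one

lemma stdBasis_mem_posRootsB (a : Fin n) : stdBasis n a ∈ posRootsB n :=
  Or.inr ⟨a, rfl⟩

lemma stdBasis_sub_stdBasis_mem_posRootsB {a b : Fin n} (h : a < b) :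
    stdBasis n a - stdBasis n b ∈ posRootsB n :=
  Or.inl ⟨a, b, h, Or.inl rfl⟩

lemma stdBasis_add_stdBasis_mem_posRootsB {a b : Fin n} (h : a ≠ b) :
    stdBasis n a + stdBasis n b ∈ posRootsB n := by
  rcases h.lt_or_gt with h | h
  · exact Or.inl ⟨a, b, h, Or.inr rfl⟩
  · exact Or.inl ⟨b, a, h, Or.inr (add_comm _ _)⟩

lemma exists_eq_stdBasis_sub_or_nonneg {x : Fin n → ℤ} (hx : x ∈ posRootsB n) :
    (∃ a b : Fin n, a < b ∧ x = stdBasis n a - stdBasis n b) ∨ 0 ≤ x := by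
  rcases hx with ⟨a, b, hab, rfl | rfl⟩ | ⟨a, rfl⟩
  · exact Or.inl ⟨a, b, hab, rfl⟩
  · exact Or.inr (add_nonneg (stdBasis_nonneg a) (stdBasis_nonneg b))
  · exact Or.inr (stdBasis_nonneg a)

lemma stdBasis_sub_add_mem_posRootsB_of_dotProduct_neg {a b : Fin n} (hab : a < b)
    {y : Fin n → ℤ} (hy : y ∈ posRootsB n) (hneg : (stdBasis n a - stdBasis n b) ⬝ᵥ y < 0) :
    stdBasis n a - stdBasis n b + y ∈ posRootsB n := by
  rcases hy with ⟨c, d, hcd, rfl | rfl⟩ | ⟨c, rfl⟩ <;>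
    simp only [sub_dotProduct, dotProduct_sub, dotProduct_add,
      stdBasis_dotProduct_stdBasis] at hneg
  · obtain rfl | rfl : b = c ∨ a = d := by
      by_contra! h
      simp only [h.1, h.2, if_false] at hneg
      split_ifs at hneg <;> omega
    · convert stdBasis_sub_stdBasis_mem_posRootsB (hab.trans hcd) using 1; abel
    · convert stdBasis_sub_stdBasis_mem_posRootsB (hcd.trans hab) using 1; abel
  · obtain rfl | rfl : b = c ∨ b = d := by
      by_contra! h
      simp only [h.1, h.2, if_false] at hneg
      split_ifs at hneg <;> omega
    · convert stdBasis_add_stdBasis_mem_posRootsB (hab.trans hcd).ne using 1; abel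
    · have hac : a ≠ c := by
        rintro rfl
        simp only [hab.ne, if_true, if_false] at hneg
        omega
      convert stdBasis_add_stdBasis_mem_posRootsB hac using 1; abel
  · obtain rfl : b = c := by
      by_contra h
      simp only [h, if_false] at hneg
      split_ifs at hneg <;> omega
    convert stdBasis_mem_posRootsB a using 1; abel

lemma add_mem_posRootsB_of_dotProduct_neg {x y : Fin n → ℤ} (hx : x ∈ posRootsB n)
    (hy : y ∈ posRootsB n) (hneg : x ⬝ᵥ y < 0) : x + y ∈ posRootsB n := by
  rcases exists_eq_stdBasis_sub_or_nonneg hx with ⟨a, b, hab, rfl⟩ | hx₀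
  · exact stdBasis_sub_add_mem_posRootsB_of_dotProduct_neg hab hy hneg
  rcases exists_eq_stdBasis_sub_or_nonneg hy with ⟨c, d, hcd, rfl⟩ | hy₀
  · rw [add_comm]
    exact stdBasis_sub_add_mem_posRootsB_of_dotProduct_neg hcd hx (dotProduct_comm x _ ▸ hneg)
  · exact absurd (dotProduct_nonneg_of_nonneg hx₀ hy₀) hneg.not_ge

lemma dotProduct_nonneg_of_add_notMem_posRootsB {x y : Fin n → ℤ} (hx : x ∈ posRootsB n)
    (hy : y ∈ posRootsB n) (hxy : x + y ∉ posRootsB n) : 0 ≤ x ⬝ᵥ y :=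
  not_lt.1 (mt (add_mem_posRootsB_of_dotProduct_neg hx hy) hxy)

lemma one_le_dotProduct_self_of_mem_posRootsB {x : Fin n → ℤ} (hx : x ∈ posRootsB n) :
    1 ≤ x ⬝ᵥ x := by
  rcases hx with ⟨a, b, hab, rfl | rfl⟩ | ⟨a, rfl⟩
  · simp [stdBasis_dotProduct_stdBasis, hab.ne, hab.ne']
  · simp [stdBasis_dotProduct_stdBasis, hab.ne, hab.ne']
  · simp [stdBasis_dotProduct_stdBasis]

lemma simpleRootsB_subset_posRootsB (hn : 2 ≤ n) : simpleRootsB n hn ⊆ posRootsB n := by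
  rintro s (⟨a, b, hab, rfl⟩ | rfl)
  · exact stdBasis_sub_stdBasis_mem_posRootsB (by fin_omega)
  · exact stdBasis_mem_posRootsB _

end PositiveRoots

section Height

/-- `heightB n ⬝ᵥ v` is the sum of the coefficients of `v` in the basis of simple roots. -/
def heightB (n : ℕ) : Fin n → ℤ := fun i => n - i

variable {n : ℕ} (hn : 2 ≤ n)

lemma heightB_dotProduct_of_mem_simpleRootsB {s : Fin n → ℤ} (hs : s ∈ simpleRootsB n hn) :
    heightB n ⬝ᵥ s = 1 := by
  rcases hs with ⟨a, b, hab, rfl⟩ | rfl <;>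
    simp only [heightB, stdBasis, dotProduct_sub, dotProduct_single_one] <;>
    omega

lemma sum_smul_simpleRootsB_ne_zero {S : Finset (Fin n → ℤ)} {m : (Fin n → ℤ) → ℕ}
    (hS : S.Nonempty) (hSsub : (↑S : Set (Fin n → ℤ)) ⊆ simpleRootsB n hn)
    (hm : ∀ s ∈ S, 1 ≤ m s) : ∑ s ∈ S, (m s : ℤ) • s ≠ 0 := by
  have hheight : heightB n ⬝ᵥ ∑ s ∈ S, (m s : ℤ) • s = ∑ s ∈ S, (m s : ℤ) := by
    rw [dotProduct_sum]
    refine Finset.sum_congr rfl fun s hs => ?_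
    rw [dotProduct_smul, heightB_dotProduct_of_mem_simpleRootsB hn (hSsub hs), smul_eq_mul,
      mul_one]
  have hpos : 0 < ∑ s ∈ S, (m s : ℤ) :=
    Finset.sum_pos (fun s hs => by exact_mod_cast hm s hs) hS
  intro h
  rw [h, dotProduct_zero] at hheight
  omega

end Height

theorem no_decomposition_typeB (n : ℕ) (hn : 2 ≤ n) :
    ¬ ∃ (ξ ζ : Fin n → ℤ) (S : Finset (Fin n → ℤ)) (m : (Fin n → ℤ) → ℕ),
        ξ ∈ posRootsB n ∧ ζ ∈ posRootsB n ∧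
        S.Nonempty ∧ (↑S : Set (Fin n → ℤ)) ⊆ simpleRootsB n hn ∧ (∀ s ∈ S, 1 ≤ m s) ∧
        stdBasis n ⟨0, by omega⟩ + stdBasis n ⟨1, by omega⟩ =
          ξ + ζ + ∑ s ∈ S, (m s : ℤ) • s ∧
        ξ + ζ ∉ posRootsB n ∧
        ∀ s ∈ S, ξ + s ∉ posRootsB n ∧ ζ + s ∉ posRootsB n := by
  rintro ⟨ξ, ζ, S, m, hξ, hζ, hS, hSsub, hm, hsum, hξζ, hsimple⟩
  have hσ : ∀ x ∈ posRootsB n, (∀ s ∈ S, x + s ∉ posRootsB n) →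
      0 ≤ x ⬝ᵥ ∑ s ∈ S, (m s : ℤ) • s := fun x hx hxS =>
    dotProduct_sum_smul_nonneg
      (fun s hs => dotProduct_nonneg_of_add_notMem_posRootsB hx
        (simpleRootsB_subset_posRootsB hn (hSsub hs)) (hxS s hs))
      (fun s _ => Int.natCast_nonneg (m s))
  have hthree := three_le_dotProduct_self_add_add
    (one_le_dotProduct_self_of_mem_posRootsB hξ) (one_le_dotProduct_self_of_mem_posRootsB hζ)
    (one_le_dotProduct_self_of_ne_zero (sum_smul_simpleRootsB_ne_zero hn hS hSsub hm))
    (dotProduct_nonneg_of_add_notMem_posRootsB hξ hζ hξζ)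
    (hσ ξ hξ fun s hs => (hsimple s hs).1) (hσ ζ hζ fun s hs => (hsimple s hs).2)
  rw [← hsum] at hthree
  simp [add_dotProduct, dotProduct_add, stdBasis_dotProduct_stdBasis] at hthree
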